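/- arXiv:2006.15088 — 2 statements merged into one kernel-verified Lean document; each statement's English description precedes it below -/
import Mathlib

section
/- If κ is a positive semidefinite kernel on a set X, then the kernel (x, x') ↦ exp(κ(x, x')) is positive semidefinite. -/
/-- A real kernel is positive semidefinite if it is symmetric and all of its
finite quadratic forms are nonnegative. -/
def IsPSDKernel {X : Type*} (κ : X → X → ℝ) : Prop :=
  (∀ x y, κ x y = κ y x) ∧
  ∀ (n : ℕ) (x : Fin n → X) (c : Fin n → ℝ),
    0 ≤ ∑ i, ∑ j, c i * c j * κ (x i) (x j)

lemma gram_posSemidef {X : Type*} {κ : X → X → ℝ} (h : IsPSDKernel κ)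
    {n : ℕ} (x : Fin n → X) :
    Matrix.PosSemidef (Matrix.of fun i j => κ (x i) (x j)) := by
  refine Matrix.PosSemidef.of_dotProduct_mulVec_nonneg ?_ ?_
  · ext i j
    simp [Matrix.conjTranspose_apply]
    exact h.1 (x j) (x i)
  · intro c
    refine le_of_le_of_eq (h.2 n x c) ?_
    simp only [dotProduct, Matrix.mulVec, Matrix.of_apply, Pi.star_apply, star_trivial,
      Finset.mul_sum]
    exact Finset.sum_congr rfl fun i _ => Finset.sum_congr rfl fun j _ => by ring

open scoped MatrixOrder in
lemma IsPSDKernel.mul' {X : Type*} {κ₁ κ₂ : X → X → ℝ}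
    (h1 : IsPSDKernel κ₁) (h2 : IsPSDKernel κ₂) :
    IsPSDKernel (fun x y => κ₁ x y * κ₂ x y) := by
  refine ⟨fun x y => by show κ₁ x y * κ₂ x y = κ₁ y x * κ₂ y x; rw [h1.1, h2.1], ?_⟩
  intro n x c
  have hM := gram_posSemidef h1 x
  set S := CFC.sqrt (Matrix.of fun i j => κ₁ (x i) (x j)) with hS
  have hsq : S * S = Matrix.of fun i j => κ₁ (x i) (x j) := CFC.sqrt_mul_sqrt_self _ hM.nonneg
  have hherm : Matrix.IsHermitian S := (Matrix.nonneg_iff_posSemidef.mp (CFC.sqrt_nonneg (Matrix.of fun i j => κ₁ (x i) (x j)))).1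
  have key : ∀ i j, κ₁ (x i) (x j) = ∑ k, S k i * S k j := by
    intro i j
    have h0 := congrFun (congrFun hsq i) j
    rw [Matrix.mul_apply] at h0
    simp only [Matrix.of_apply] at h0
    rw [← h0]
    refine Finset.sum_congr rfl fun k _ => ?_
    have hik : S k i = S i k := by simpa using hherm.apply i k
    rw [hik]
  have expand : ∀ i j, c i * c j * (κ₁ (x i) (x j) * κ₂ (x i) (x j))
      = ∑ k, (c i * S k i) * (c j * S k j) * κ₂ (x i) (x j) := by
    intro i j
    rw [key i j, Finset.sum_mul, Finset.mul_sum]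
    exact Finset.sum_congr rfl fun k _ => by ring
  calc (0:ℝ) ≤ ∑ k, ∑ i, ∑ j, (c i * S k i) * (c j * S k j) * κ₂ (x i) (x j) :=
        Finset.sum_nonneg fun k _ => h2.2 n x (fun i => c i * S k i)
    _ = ∑ i, ∑ k, ∑ j, (c i * S k i) * (c j * S k j) * κ₂ (x i) (x j) := Finset.sum_comm
    _ = ∑ i, ∑ j, ∑ k, (c i * S k i) * (c j * S k j) * κ₂ (x i) (x j) :=
        Finset.sum_congr rfl fun i _ => Finset.sum_comm
    _ = ∑ i, ∑ j, c i * c j * (κ₁ (x i) (x j) * κ₂ (x i) (x j)) := by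
        exact Finset.sum_congr rfl fun i _ => Finset.sum_congr rfl fun j _ => (expand i j).symm

lemma IsPSDKernel.pow' {X : Type*} {κ : X → X → ℝ} (h : IsPSDKernel κ) :
    ∀ m : ℕ, IsPSDKernel (fun x y => κ x y ^ m)
  | 0 => by
      refine ⟨fun x y => rfl, ?_⟩
      intro n x c
      have : ∑ i, ∑ j, c i * c j * κ (x i) (x j) ^ 0 = (∑ i, c i) ^ 2 := by
        simp [sq, Finset.sum_mul_sum]
      rw [this]
      positivity
  | m + 1 => by
      have := (IsPSDKernel.pow' h m).mul' h
      refine ⟨fun x y => by show κ x y ^ (m+1) = κ y x ^ (m+1); rw [h.1], ?_⟩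
      intro n x c
      have h2 := this.2 n x c
      simpa [pow_succ] using h2

theorem stmt4 {X : Type*} (κ : X → X → ℝ) (h : IsPSDKernel κ) :
    IsPSDKernel (fun x x' => Real.exp (κ x x')) := by
  refine ⟨fun x y => by show Real.exp (κ x y) = Real.exp (κ y x); rw [h.1], ?_⟩
  intro n x c
  have hexp : ∀ r : ℝ, Real.exp r = ∑' k : ℕ, r ^ k / (Nat.factorial k) := by
    intro r
    rw [Real.exp_eq_exp_ℝ, NormedSpace.exp_eq_tsum_div]
  have hsum : ∀ i j : Fin n, Summable (fun k : ℕ =>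
      c i * c j * (κ (x i) (x j) ^ k / ((Nat.factorial k) : ℝ))) := fun i j =>
    (Real.summable_pow_div_factorial (κ (x i) (x j))).mul_left _
  have hsum2 : ∀ i : Fin n, Summable (fun k : ℕ =>
      ∑ j, c i * c j * (κ (x i) (x j) ^ k / ((Nat.factorial k) : ℝ))) := fun i =>
    summable_sum fun j _ => hsum i j
  have step1 : ∑ i, ∑ j, c i * c j * Real.exp (κ (x i) (x j))
      = ∑' k : ℕ, ∑ i, ∑ j, c i * c j * (κ (x i) (x j) ^ k / ((Nat.factorial k) : ℝ)) := by
    rw [Summable.tsum_finsetSum (fun i _ => hsum2 i)]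
    refine Finset.sum_congr rfl fun i _ => ?_
    rw [Summable.tsum_finsetSum (fun j _ => hsum i j)]
    refine Finset.sum_congr rfl fun j _ => ?_
    rw [hexp, ← tsum_mul_left]
  rw [step1]
  refine tsum_nonneg fun k => ?_
  have hq : 0 ≤ ∑ i, ∑ j, c i * c j * κ (x i) (x j) ^ k := (h.pow' k).2 n x c
  have heq : ∑ i, ∑ j, c i * c j * (κ (x i) (x j) ^ k / ((Nat.factorial k) : ℝ))
      = (∑ i, ∑ j, c i * c j * κ (x i) (x j) ^ k) / ((Nat.factorial k) : ℝ) := by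
    rw [Finset.sum_div]
    refine Finset.sum_congr rfl fun i _ => ?_
    rw [Finset.sum_div]
    exact Finset.sum_congr rfl fun j _ => by ring
  rw [heq]
  positivity
end

section
/- Let κ(x, x') = ⟨φ(x), φ(x')⟩ be a kernel with feature map φ : X → ℝ^d, and let g : ℝ → ℝ be continuous with all finite Gram matrices of g∘κ positive semidefinite whenever those of κ are. If κ is psd and g(t) = exp(t), then for any finite points x₁,…,x_n, the matrix [exp(⟨φ(x_i), φ(x_j)⟩)]_{ij} is positive definite whenever the φ(x_i) are pairwise distinct. -/
open Matrix
open scoped InnerProductSpace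

private lemma real_exp_tsum' (t : ℝ) : Real.exp t = ∑' k : ℕ, t ^ k / k.factorial := by
  rw [Real.exp_eq_exp_ℝ, NormedSpace.exp_eq_tsum_div]

private lemma sep_vec' {d : ℕ} (S : Finset (EuclideanSpace ℝ (Fin d)))
    (hS : (0 : EuclideanSpace ℝ (Fin d)) ∉ S) :
    ∃ w : EuclideanSpace ℝ (Fin d), ∀ u ∈ S, ⟪u, w⟫_ℝ ≠ 0 := by
  classical
  induction S using Finset.induction_on with
  | empty => exact ⟨0, by simp⟩
  | @insert a s ha ih =>
    have ha0 : a ≠ 0 := fun h => hS (h ▸ Finset.mem_insert_self a s)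
    obtain ⟨w, hw⟩ := ih (fun h => hS (Finset.mem_insert_of_mem h))
    by_cases hcase : ⟪a, w⟫_ℝ = 0
    · obtain ⟨t, ht⟩ := Infinite.exists_notMem_finset
        (insert (0:ℝ) (s.image (fun u => -⟪u, w⟫_ℝ / ⟪u, a⟫_ℝ)))
      have ht0 : t ≠ 0 := fun h => ht (h ▸ Finset.mem_insert_self _ _)
      refine ⟨w + t • a, ?_⟩
      intro u hu
      rw [inner_add_right, real_inner_smul_right]
      rcases Finset.mem_insert.mp hu with rfl | hu
      · rw [hcase, zero_add]
        exact mul_ne_zero ht0 ((inner_self_ne_zero (𝕜 := ℝ)).mpr ha0)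
      · by_cases hua : ⟪u, a⟫_ℝ = 0
        · simpa [hua] using hw u hu
        · intro hcontra
          apply ht
          refine Finset.mem_insert_of_mem (Finset.mem_image.mpr ⟨u, hu, ?_⟩)
          rw [div_eq_iff hua]
          linarith
    · refine ⟨w, fun u hu => ?_⟩
      rcases Finset.mem_insert.mp hu with rfl | hu
      · exact hcase
      · exact hw u hu

theorem stmt18 {X : Type*} {d n : ℕ} (φ : X → EuclideanSpace ℝ (Fin d))
    (x : Fin n → X)
    (hdist : ∀ i j, i ≠ j → φ (x i) ≠ φ (x j)) :
    (Matrix.of fun i j => Real.exp ⟪φ (x i), φ (x j)⟫_ℝ).PosDef := by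
  classical
  set v : Fin n → EuclideanSpace ℝ (Fin d) := fun i => φ (x i) with hv
  rw [Matrix.posDef_iff_dotProduct_mulVec]
  constructor
  · ext i j
    simp only [Matrix.conjTranspose_apply, Matrix.of_apply, star_trivial]
    rw [real_inner_comm]
  intro c hc
  -- separating vector
  obtain ⟨w, hw⟩ := sep_vec'
    ((Finset.univ.filter (fun p : Fin n × Fin n => p.1 ≠ p.2)).image (fun p => v p.1 - v p.2))
    (by
      simp only [Finset.mem_image, Finset.mem_filter, Finset.mem_univ, true_and]
      rintro ⟨⟨i, j⟩, hij, h0⟩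
      exact hdist i j hij (sub_eq_zero.mp h0))
  have hinj : Function.Injective (fun i => ⟪v i, w⟫_ℝ) := by
    intro i j hij
    have hij' : ⟪v i, w⟫_ℝ = ⟪v j, w⟫_ℝ := hij
    by_contra hne
    apply hw (v i - v j)
      (Finset.mem_image.mpr ⟨(i, j), Finset.mem_filter.mpr ⟨Finset.mem_univ _, hne⟩, rfl⟩)
    rw [inner_sub_left, hij', sub_self]
  -- coefficients S
  set S : (k : ℕ) → (Fin k → Fin d) → ℝ :=
    fun k f => ∑ i, c i * ∏ m, v i (f m) with hS
  have inner_pow : ∀ (u u' : EuclideanSpace ℝ (Fin d)) (k : ℕ), ⟪u, u'⟫_ℝ ^ k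
      = ∑ f : Fin k → Fin d, ∏ m, (u (f m) * u' (f m)) := by
    intro u u' k
    have h0 : ⟪u, u'⟫_ℝ = ∑ l, u l * u' l := by
      rw [PiLp.inner_apply]; simp; exact Finset.sum_congr rfl fun _ _ => mul_comm _ _
    rw [h0, ← Fin.prod_const k (∑ l, u l * u' l), Finset.prod_univ_sum]
    exact Finset.sum_congr Fintype.piFinset_univ fun _ _ => rfl
  -- key expansion
  have key : ∀ k : ℕ, ∑ i, ∑ j, c i * c j * ⟪v i, v j⟫_ℝ ^ k
      = ∑ f : Fin k → Fin d, (S k f) ^ 2 := by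
    intro k
    calc ∑ i, ∑ j, c i * c j * ⟪v i, v j⟫_ℝ ^ k
        = ∑ i, ∑ j, ∑ f : Fin k → Fin d,
            (c i * ∏ m, v i (f m)) * (c j * ∏ m, v j (f m)) := by
          refine Finset.sum_congr rfl fun i _ => Finset.sum_congr rfl fun j _ => ?_
          rw [inner_pow, Finset.mul_sum]
          refine Finset.sum_congr rfl fun f _ => ?_
          rw [Finset.prod_mul_distrib]; ring
      _ = ∑ i, ∑ f : Fin k → Fin d, ∑ j,
            (c i * ∏ m, v i (f m)) * (c j * ∏ m, v j (f m)) :=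
          Finset.sum_congr rfl fun i _ => Finset.sum_comm
      _ = ∑ f : Fin k → Fin d, ∑ i, ∑ j,
            (c i * ∏ m, v i (f m)) * (c j * ∏ m, v j (f m)) := Finset.sum_comm
      _ = ∑ f : Fin k → Fin d, (S k f) ^ 2 := by
          refine Finset.sum_congr rfl fun f _ => ?_
          rw [sq, hS, Finset.sum_mul_sum]
  have hsummable : ∀ i j : Fin n,
      Summable (fun k : ℕ => c i * c j * (⟪v i, v j⟫_ℝ ^ k / k.factorial)) :=
    fun i j => (Real.summable_pow_div_factorial _).mul_left _
  have hsumS : Summable (fun k : ℕ => (∑ f : Fin k → Fin d, (S k f) ^ 2) / k.factorial) := by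
    have : (fun k : ℕ => (∑ f : Fin k → Fin d, (S k f) ^ 2) / k.factorial)
        = fun k : ℕ => ∑ i, ∑ j, c i * c j * (⟪v i, v j⟫_ℝ ^ k / k.factorial) := by
      funext k
      rw [← key k, Finset.sum_div]
      refine Finset.sum_congr rfl fun i _ => ?_
      rw [Finset.sum_div]
      exact Finset.sum_congr rfl fun j _ => by ring
    rw [this]
    exact summable_sum (fun i _ => summable_sum (fun j _ => hsummable i j))
  have hQ : star c ⬝ᵥ ((Matrix.of fun i j => Real.exp ⟪φ (x i), φ (x j)⟫_ℝ).mulVec c)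
      = ∑' k : ℕ, (∑ f : Fin k → Fin d, (S k f) ^ 2) / k.factorial := by
    have h1 : star c ⬝ᵥ ((Matrix.of fun i j => Real.exp ⟪φ (x i), φ (x j)⟫_ℝ).mulVec c)
        = ∑ i, ∑ j, c i * c j * Real.exp ⟪v i, v j⟫_ℝ := by
      simp only [dotProduct, Matrix.mulVec, Matrix.of_apply, Pi.star_apply, star_trivial]
      refine Finset.sum_congr rfl fun i _ => ?_
      rw [Finset.mul_sum]
      exact Finset.sum_congr rfl fun j _ => by rw [hv]; ring
    rw [h1]
    have h2 : ∀ i j : Fin n, c i * c j * Real.exp ⟪v i, v j⟫_ℝ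
        = ∑' k : ℕ, c i * c j * (⟪v i, v j⟫_ℝ ^ k / k.factorial) := by
      intro i j
      rw [real_exp_tsum', ← tsum_mul_left]
    calc ∑ i, ∑ j, c i * c j * Real.exp ⟪v i, v j⟫_ℝ
        = ∑ i, ∑ j, ∑' k : ℕ, c i * c j * (⟪v i, v j⟫_ℝ ^ k / k.factorial) := by
          exact Finset.sum_congr rfl fun i _ => Finset.sum_congr rfl fun j _ => h2 i j
      _ = ∑' k : ℕ, ∑ i, ∑ j, c i * c j * (⟪v i, v j⟫_ℝ ^ k / k.factorial) := by
          rw [Summable.tsum_finsetSum (fun i _ => summable_sum (fun j _ => hsummable i j))]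
          exact Finset.sum_congr rfl fun i _ => (Summable.tsum_finsetSum (fun j _ => hsummable i j)).symm
      _ = ∑' k : ℕ, (∑ f : Fin k → Fin d, (S k f) ^ 2) / k.factorial := by
          congr 1; funext k
          rw [← key k, Finset.sum_div]
          refine Finset.sum_congr rfl fun i _ => ?_
          rw [Finset.sum_div]
          exact Finset.sum_congr rfl fun j _ => by ring
  rw [hQ]
  -- existence of a positive term
  have hexists : ∃ k : ℕ, 0 < (∑ f : Fin k → Fin d, (S k f) ^ 2) / k.factorial := by
    by_contra hcon
    push_neg at hcon
    have hzero : ∀ k : ℕ, ∀ f : Fin k → Fin d, S k f = 0 := by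
      intro k f
      have hk : (∑ f : Fin k → Fin d, (S k f) ^ 2) = 0 := by
        have h1 : 0 ≤ ∑ f : Fin k → Fin d, (S k f) ^ 2 :=
          Finset.sum_nonneg fun f _ => sq_nonneg _
        have h2 := hcon k
        have hfac : (0:ℝ) < k.factorial := by positivity
        have h3 : (∑ f : Fin k → Fin d, (S k f) ^ 2) / k.factorial = 0 :=
          le_antisymm h2 (div_nonneg h1 hfac.le)
        rcases div_eq_zero_iff.mp h3 with h | h
        · exact h
        · exact absurd h hfac.ne'
      have h4 := (Finset.sum_eq_zero_iff_of_nonneg (fun f _ => sq_nonneg (S k f))).mp hk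
        f (Finset.mem_univ f)
      exact pow_eq_zero_iff two_ne_zero |>.mp h4
    -- then ∑ i, c i * (⟪v i, w⟫)^k = 0 for all k
    have hmom : ∀ k : ℕ, ∑ i, c i * ⟪v i, w⟫_ℝ ^ k = 0 := by
      intro k
      calc ∑ i, c i * ⟪v i, w⟫_ℝ ^ k
          = ∑ i, c i * ∑ f : Fin k → Fin d, ∏ m, (v i (f m) * w (f m)) := by
            exact Finset.sum_congr rfl fun i _ => by rw [inner_pow]
        _ = ∑ f : Fin k → Fin d, (S k f) * ∏ m, w (f m) := by
            simp_rw [Finset.mul_sum]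
            rw [Finset.sum_comm]
            refine Finset.sum_congr rfl fun f _ => ?_
            rw [hS, Finset.sum_mul]
            refine Finset.sum_congr rfl fun i _ => ?_
            rw [Finset.prod_mul_distrib]; ring
        _ = 0 := by
            refine Finset.sum_eq_zero fun f _ => ?_
            rw [hzero k f, zero_mul]
    have : c = 0 := by
      refine Matrix.eq_zero_of_mulVec_eq_zero
        (M := (Matrix.vandermonde (fun i => ⟪v i, w⟫_ℝ))ᵀ) ?_ ?_
      · rw [Matrix.det_transpose]
        exact Matrix.det_vandermonde_ne_zero_iff.mpr hinj
      · funext j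
        have := hmom (j : ℕ)
        simp only [Matrix.mulVec, dotProduct, Matrix.transpose_apply,
          Matrix.vandermonde_apply, Pi.zero_apply]
        rw [← this]
        exact Finset.sum_congr rfl fun i _ => mul_comm _ _
    exact hc this
  obtain ⟨k, hk⟩ := hexists
  refine Summable.tsum_pos hsumS (fun m => ?_) k hk
  positivity
end
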